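/- Let (X,d,μ) be a space of homogeneous type with quasi-triangle constant A₀ and upper dimension ω. Fix δ ∈ (0,1), k ∈ ℤ, a point y₀ ∈ X, and constants C₀, ν > 0, a > 0, η ∈ (0,1]. Suppose ψ : X → ℝ satisfies |ψ(x)| ≤ C₀ · μ(B(y₀,δ^k))^(−1/2) · exp(−ν (d(y₀,x)/δ^k)^a) for all x, and |ψ(x) − ψ(y)| ≤ C₀ · μ(B(y₀,δ^k))^(−1/2) · (d(x,y)/δ^k)^η · exp(−ν (d(y₀,x)/δ^k)^a) whenever d(x,y) ≤ δ^k. Then for every γ > 0 there is a constant C, depending only on C₀, ν, a, γ, η, A₀, the doubling constant and ω (but not on k, y₀ or ψ), such that for all x, y ∈ X with d(x,y) ≤ (2A₀)^(−1)(δ^k + d(x,y₀)): |ψ(x) − ψ(y)| / μ(B(y₀,δ^k))^(1/2) ≤ C · (d(x,y)/(δ^k + d(x,y₀)))^η · (V_{δ^k}(y₀) + V(x,y₀))^(−1) · (δ^k/(δ^k + d(x,y₀)))^γ. -/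

import Mathlib

open MeasureTheory Real
open scoped ENNReal

/-- A space of homogeneous type in the sense of Coifman and Weiss:
a quasi-metric `d` with quasi-triangle constant `A0`, and a doubling
Borel measure `μ` with doubling constant `Cmu` and upper dimension `dim`. -/
structure SHT (X : Type*) [MeasurableSpace X] where
  d : X → X → ℝ
  μ : Measure X
  A0 : ℝ
  Cmu : ℝ
  dim : ℝ
  Cdim : ℝ
  one_le_A0 : 1 ≤ A0
  d_symm : ∀ x y, d x y = d y x
  d_nonneg : ∀ x y, 0 ≤ d x y
  d_eq_zero_iff : ∀ x y, d x y = 0 ↔ x = y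
  d_triangle : ∀ x y z, d x y ≤ A0 * (d x z + d z y)
  vol_pos : ∀ x r, 0 < r → 0 < μ {y | d x y < r}
  vol_lt_top : ∀ x r, 0 < r → μ {y | d x y < r} < ⊤
  doubling : ∀ x r, 0 < r →
    (μ {y | d x y < 2 * r}).toReal ≤ Cmu * (μ {y | d x y < r}).toReal
  dim_pos : 0 < dim
  upperDim : ∀ x r lam, 0 < r → 1 ≤ lam →
    (μ {y | d x y < lam * r}).toReal ≤ Cdim * lam ^ dim * (μ {y | d x y < r}).toReal

namespace SHT

variable {X : Type*} [MeasurableSpace X]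

/-- `V S x r` is `μ(B(x,r))` as a real number. -/
noncomputable def V (S : SHT X) (x : X) (r : ℝ) : ℝ := (S.μ {y | S.d x y < r}).toReal

/-- `Vd S x y` is `V(x,y) = μ(B(x,d(x,y)))`. -/
noncomputable def Vd (S : SHT X) (x y : X) : ℝ := S.V x (S.d x y)

end SHT

/-!
Write `r = δ^k` and `ρ = (r + d(x,y₀))/r`. For `d(x,y) ≤ r` the claim is the Hölder bound, and
for `d(x,y) > r` it follows from the size bound at `x` and at `y`, because `(d(x,y)/r)^η ≥ 1`;
either way `|ψ x - ψ y| ≤ C₀ V_r(y₀)^{-1/2} (d(x,y)/r)^η (w x + w y)` with the weight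
`w z = exp(-ν (d(y₀,z)/r)^a)`. The hypothesis `d(x,y) ≤ (2A₀)⁻¹(r + d(x,y₀))` keeps `y` as far
from `y₀` as `x` up to the factor `2A₀`, so both weights decay like `exp(-c ρ^a)` and absorb any
power `ρ^β`. Both balls `B(y₀,r)` and `B(x,d(x,y₀))` lie in `B(y₀, 2A₀ ρ r)`, so the upper
dimension gives `V_r(y₀) + V(x,y₀) ≲ ρ^ω V_r(y₀)`; taking `β = ω + η + γ` pays for this volume
factor and for the two powers of `ρ` in the conclusion.
-/

theorem exists_one_add_rpow_mul_exp_neg_le {β ν a : ℝ} (hβ : 0 ≤ β) (hν : 0 < ν) (ha : 0 < a) :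
    ∃ M, ∀ s : ℝ, 0 ≤ s → (1 + s) ^ β * exp (-ν * s ^ a) ≤ M := by
  obtain ⟨n, hn⟩ : ∃ n : ℕ, β ≤ n * a := ⟨⌈β / a⌉₊, (div_le_iff₀ ha).1 (Nat.le_ceil _)⟩
  refine ⟨2 ^ β * max 1 (n.factorial / ν ^ n), fun s hs => ?_⟩
  have hexp : 1 ≤ exp (ν * s ^ a) := one_le_exp (by positivity)
  rw [neg_mul, exp_neg, ← div_eq_mul_inv, div_le_iff₀ (exp_pos _)]
  rcases le_total s 1 with hs1 | hs1
  · calc (1 + s) ^ β ≤ 2 ^ β := rpow_le_rpow (by positivity) (by linarith) hβ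
      _ ≤ 2 ^ β * max 1 (n.factorial / ν ^ n) * exp (ν * s ^ a) := by
        rw [mul_assoc]
        exact le_mul_of_one_le_right (by positivity) (one_le_mul_of_one_le_of_one_le
          (le_max_left _ _) hexp)
  · have hpow : (s ^ a) ^ n ≤ n.factorial / ν ^ n * exp (ν * s ^ a) := by
      have := pow_div_factorial_le_exp (ν * s ^ a) (by positivity) n
      rw [div_le_iff₀ (by positivity)] at this
      rw [div_mul_eq_mul_div, le_div_iff₀ (by positivity)]
      linarith [mul_pow ν (s ^ a) n]
    calc (1 + s) ^ β ≤ (2 * s) ^ β := rpow_le_rpow (by positivity) (by linarith) hβ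
      _ = 2 ^ β * s ^ β := mul_rpow (by norm_num) hs
      _ ≤ 2 ^ β * (s ^ a) ^ n := by
        rw [← rpow_natCast, ← rpow_mul hs]
        gcongr
        linarith
      _ ≤ 2 ^ β * (n.factorial / ν ^ n * exp (ν * s ^ a)) := by gcongr
      _ ≤ 2 ^ β * max 1 (n.factorial / ν ^ n) * exp (ν * s ^ a) := by
        rw [mul_assoc]; gcongr; exact le_max_right _ _

theorem abs_sub_le_mul_rpow_mul_add {u v B w w' ρ η : ℝ} (hB : 0 ≤ B) (hw : 0 ≤ w)
    (hw' : 0 ≤ w') (hρ : 0 ≤ ρ) (hη : 0 ≤ η) (hu : |u| ≤ B * w) (hv : |v| ≤ B * w')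
    (hsmall : ρ ≤ 1 → |u - v| ≤ B * ρ ^ η * w) :
    |u - v| ≤ B * ρ ^ η * (w + w') := by
  rcases le_total ρ 1 with hρ1 | hρ1
  · calc |u - v| ≤ B * ρ ^ η * w := hsmall hρ1
      _ ≤ B * ρ ^ η * (w + w') := by gcongr; linarith
  · calc |u - v| ≤ |u| + |v| := abs_sub _ _
      _ ≤ B * (w + w') := by linarith
      _ ≤ B * ρ ^ η * (w + w') := by
        rw [mul_right_comm]
        exact le_mul_of_one_le_right (by positivity) (one_le_rpow hρ1 hη)

theorem rpow_mul_exp_neg_le_of_le {M β ν a c s q : ℝ}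
    (hM : ∀ s : ℝ, 0 ≤ s → (1 + s) ^ β * exp (-ν * s ^ a) ≤ M) (hβ : 0 ≤ β) (hs : 0 ≤ s)
    (hq : 0 ≤ q) (hqs : q ≤ c * (1 + s)) :
    exp (-ν * s ^ a) * q ^ β ≤ c ^ β * M := by
  have hc : 0 ≤ c := nonneg_of_mul_nonneg_left (hq.trans hqs) (by positivity)
  calc exp (-ν * s ^ a) * q ^ β ≤ exp (-ν * s ^ a) * (c * (1 + s)) ^ β := by gcongr
    _ = c ^ β * ((1 + s) ^ β * exp (-ν * s ^ a)) := by
      rw [mul_rpow hc (by positivity)]; ring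
    _ ≤ c ^ β * M := by gcongr; exact hM s hs

theorem div_sqrt_le_mul_rpow_mul_inv_mul_rpow {Δ B V W E K M t r Q ω η γ : ℝ} (hV : 0 < V)
    (hW : 0 < W) (hr : 0 < r) (hrQ : r ≤ Q) (ht : 0 ≤ t) (hB : 0 ≤ B) (hE : 0 ≤ E)
    (hΔ : Δ ≤ B / √V * (t / r) ^ η * E) (hWV : W ≤ K * (Q / r) ^ ω * V)
    (hEM : E * (Q / r) ^ (ω + η + γ) ≤ M) :
    Δ / √V ≤ B * K * M * (t / Q) ^ η * W⁻¹ * (r / Q) ^ γ := by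
  set ρ := Q / r with hρ
  have hQ : 0 < Q := hr.trans_le hrQ
  have hρ0 : 0 < ρ := div_pos hQ hr
  have hK : 0 ≤ K := by
    by_contra! hK
    nlinarith [mul_neg_of_neg_of_pos hK (rpow_pos_of_pos hρ0 ω)]
  have htr : (t / r) ^ η = (t / Q) ^ η * ρ ^ η := by
    rw [← mul_rpow (by positivity) hρ0.le, hρ, div_mul_div_cancel₀ hQ.ne']
  have hrQ' : (r / Q) ^ γ = (ρ ^ γ)⁻¹ := by rw [← inv_rpow hρ0.le, hρ, inv_div]
  have hρβ : ρ ^ (ω + η + γ) = ρ ^ ω * ρ ^ η * ρ ^ γ := by rw [rpow_add hρ0, rpow_add hρ0]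
  have hργ : 0 < ρ ^ γ := rpow_pos_of_pos hρ0 γ
  have hratio : ρ ^ η * E / V ≤ K * M / (W * ρ ^ γ) := by
    rw [div_le_div_iff₀ hV (by positivity)]
    calc ρ ^ η * E * (W * ρ ^ γ) ≤ ρ ^ η * E * (K * ρ ^ ω * V * ρ ^ γ) := by gcongr
      _ = K * V * (E * ρ ^ (ω + η + γ)) := by rw [hρβ]; ring
      _ ≤ K * V * M := by gcongr
      _ = K * M * V := by ring
  calc Δ / √V ≤ B / √V * (t / r) ^ η * E / √V := by gcongr
    _ = B * (t / Q) ^ η * (ρ ^ η * E / (√V * √V)) := by rw [htr]; ring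
    _ = B * (t / Q) ^ η * (ρ ^ η * E / V) := by rw [mul_self_sqrt hV.le]
    _ ≤ B * (t / Q) ^ η * (K * M / (W * ρ ^ γ)) := by gcongr
    _ = B * K * M * (t / Q) ^ η * W⁻¹ * (r / Q) ^ γ := by
      rw [hrQ']
      ring

namespace SHT

variable {X : Type*} [MeasurableSpace X] (S : SHT X)

theorem A0_pos : 0 < S.A0 := one_pos.trans_le S.one_le_A0

theorem V_pos (x : X) {r : ℝ} (hr : 0 < r) : 0 < S.V x r :=
  ENNReal.toReal_pos (S.vol_pos x r hr).ne' (S.vol_lt_top x r hr).ne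

theorem V_mono (x : X) {r s : ℝ} (hs : 0 < s) (hrs : r ≤ s) : S.V x r ≤ S.V x s :=
  ENNReal.toReal_mono (S.vol_lt_top x s hs).ne
    (measure_mono fun _ (hz : S.d x _ < r) => hz.trans_le hrs)

theorem Vd_le_V (x y : X) {s : ℝ} (hs : 0 < s) (hxs : 2 * S.A0 * S.d x y ≤ s) :
    S.Vd x y ≤ S.V y s := by
  refine ENNReal.toReal_mono (S.vol_lt_top y s hs).ne (measure_mono fun z hz => ?_)
  have hz : S.d x z < S.d x y := hz
  show S.d y z < s
  calc S.d y z ≤ S.A0 * (S.d y x + S.d x z) := S.d_triangle y z x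
    _ < S.A0 * (S.d x y + S.d x y) := by rw [S.d_symm y x]; gcongr; exact S.A0_pos
    _ = 2 * S.A0 * S.d x y := by ring
    _ ≤ s := hxs

theorem V_add_Vd_le (x y₀ : X) {r : ℝ} (hr : 0 < r) :
    S.V y₀ r + S.Vd x y₀ ≤
      2 * S.Cdim * (2 * S.A0) ^ S.dim * ((r + S.d x y₀) / r) ^ S.dim * S.V y₀ r := by
  set R := 2 * S.A0 * (r + S.d x y₀)
  have hA := S.one_le_A0
  have hD := S.d_nonneg x y₀
  have hrR : r ≤ R := by nlinarith
  have hR : 0 < R := hr.trans_le hrR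
  have hball : S.V y₀ R ≤ S.Cdim * (R / r) ^ S.dim * S.V y₀ r := by
    simpa only [V, div_mul_cancel₀ R hr.ne'] using
      S.upperDim y₀ r (R / r) hr ((one_le_div hr).2 hrR)
  have hVd : S.Vd x y₀ ≤ S.V y₀ R := S.Vd_le_V x y₀ hR (by nlinarith)
  have hRr : R / r = 2 * S.A0 * ((r + S.d x y₀) / r) := mul_div_assoc _ _ _
  rw [hRr, mul_rpow (by positivity) (by positivity)] at hball
  linarith [S.V_mono y₀ hR hrR]

theorem add_le_mul_add_of_le_inv_mul {x y y₀ : X} {r : ℝ} (hr : 0 ≤ r)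
    (hxy : S.d x y ≤ (2 * S.A0)⁻¹ * (r + S.d x y₀)) :
    r + S.d x y₀ ≤ 2 * S.A0 * (r + S.d y₀ y) := by
  have hA := S.one_le_A0
  have htri : S.d x y₀ ≤ S.A0 * (S.d x y + S.d y₀ y) := by
    simpa only [S.d_symm y y₀] using S.d_triangle x y₀ y
  have hxy' : 2 * S.A0 * S.d x y ≤ r + S.d x y₀ := by
    rwa [← le_inv_mul_iff₀ (by positivity)]
  nlinarith

end SHT

/-- decay plus Hölder regularity of a wavelet implies the
test-function smoothness condition. -/
theorem statement1 {X : Type*} [MeasurableSpace X] (S : SHT X)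
    (δ : ℝ) (hδ : δ ∈ Set.Ioo (0:ℝ) 1)
    (C₀ ν a η : ℝ) (hC₀ : 0 < C₀) (hν : 0 < ν) (ha : 0 < a)
    (hη : η ∈ Set.Ioc (0:ℝ) 1)
    (γ : ℝ) (hγ : 0 < γ) :
    ∃ C > (0:ℝ), ∀ (k : ℤ) (y₀ : X) (ψ : X → ℝ),
      (∀ x, |ψ x| ≤ C₀ / Real.sqrt (S.V y₀ (δ ^ k)) *
          Real.exp (-ν * (S.d y₀ x / δ ^ k) ^ a)) →
      (∀ x y, S.d x y ≤ δ ^ k →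
        |ψ x - ψ y| ≤ C₀ / Real.sqrt (S.V y₀ (δ ^ k)) *
          (S.d x y / δ ^ k) ^ η * Real.exp (-ν * (S.d y₀ x / δ ^ k) ^ a)) →
      ∀ x y, S.d x y ≤ (2 * S.A0)⁻¹ * (δ ^ k + S.d x y₀) →
        |ψ x - ψ y| / Real.sqrt (S.V y₀ (δ ^ k)) ≤
          C * (S.d x y / (δ ^ k + S.d x y₀)) ^ η *
            (S.V y₀ (δ ^ k) + S.Vd x y₀)⁻¹ *
            (δ ^ k / (δ ^ k + S.d x y₀)) ^ γ := by
  obtain ⟨hδ0, -⟩ := hδ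
  have hA := S.A0_pos
  set β := S.dim + η + γ
  have hβ : 0 ≤ β := by linarith [S.dim_pos, hη.1]
  obtain ⟨M, hM⟩ := exists_one_add_rpow_mul_exp_neg_le hβ hν ha
  have hM1 : 1 ≤ M := by simpa [zero_rpow ha.ne'] using hM 0 le_rfl
  refine ⟨C₀ * (2 * max S.Cdim 1 * (2 * S.A0) ^ S.dim) * ((1 + (2 * S.A0) ^ β) * M),
    by positivity, fun k y₀ ψ hsize hholder x y hxy => ?_⟩
  set r := δ ^ k
  have hr : 0 < r := zpow_pos hδ0 k
  have hD := S.d_nonneg x y₀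
  have hVr := S.V_pos y₀ hr
  set w : X → ℝ := fun z => exp (-ν * (S.d y₀ z / r) ^ a)
  have hdiff : |ψ x - ψ y| ≤ C₀ / √(S.V y₀ r) * (S.d x y / r) ^ η * (w x + w y) :=
    abs_sub_le_mul_rpow_mul_add (by positivity) (exp_pos _).le (exp_pos _).le
      (div_nonneg (S.d_nonneg x y) hr.le) hη.1.le (hsize x) (hsize y)
      fun h => hholder x y ((div_le_one hr).1 h)
  have hwx : w x * ((r + S.d x y₀) / r) ^ β ≤ 1 ^ β * M :=
    rpow_mul_exp_neg_le_of_le hM hβ (div_nonneg (S.d_nonneg y₀ x) hr.le) (by positivity)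
      (by rw [S.d_symm y₀ x, one_mul, add_div, div_self hr.ne'])
  have hwy : w y * ((r + S.d x y₀) / r) ^ β ≤ (2 * S.A0) ^ β * M :=
    rpow_mul_exp_neg_le_of_le hM hβ (div_nonneg (S.d_nonneg y₀ y) hr.le) (by positivity) (by
      rw [one_add_div hr.ne', ← mul_div_assoc, div_le_div_iff_of_pos_right hr]
      exact S.add_le_mul_add_of_le_inv_mul hr.le hxy)
  refine div_sqrt_le_mul_rpow_mul_inv_mul_rpow (ω := S.dim) hVr
    (add_pos_of_pos_of_nonneg hVr ENNReal.toReal_nonneg) hr (by linarith) (S.d_nonneg x y)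
    (by positivity) (by positivity) hdiff ?_ ?_
  · calc S.V y₀ r + S.Vd x y₀
        ≤ 2 * S.Cdim * (2 * S.A0) ^ S.dim * ((r + S.d x y₀) / r) ^ S.dim * S.V y₀ r :=
          S.V_add_Vd_le x y₀ hr
      _ ≤ _ := by gcongr; exact le_max_left _ _
  · rw [one_rpow] at hwx
    linarith
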